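/- arXiv:2011.08384 — 5 statements merged into one kernel-verified Lean document; each statement's English description precedes it below -/
import Mathlib

section
/- For all real z with 0 < z ≤ 1, we have 6(1-z)^2 - 3 ≤ -log z. -/
theorem stmt_0 (z : ℝ) (h0 : 0 < z) (h1 : z ≤ 1) :
    6 * (1 - z) ^ 2 - 3 ≤ -Real.log z := by
  rcases le_or_gt z (1/2) with hz | hz
  · have h8 : (0:ℝ) < 8 * z := by linarith
    have hle := Real.log_le_sub_one_of_pos h8
    have hlog : Real.log (8 * z) = Real.log 8 + Real.log z := by
      rw [Real.log_mul (by norm_num) (ne_of_gt h0)]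
    have h8e : Real.log 8 = 3 * Real.log 2 := by
      rw [show (8:ℝ) = 2^3 by norm_num, Real.log_pow]; ring
    have h2 := Real.log_two_gt_d9
    nlinarith
  · have hle := Real.log_le_sub_one_of_pos h0
    nlinarith
end

section
/- For all real y with -1 ≤ y ≤ 1, we have 0.75·y - 0.75·y² ≤ log(1 + 0.75·y + 0.174·y²). -/
theorem stmt_3 (y : ℝ) (h0 : -1 ≤ y) (h1 : y ≤ 1) :
    0.75 * y - 0.75 * y ^ 2 ≤ Real.log (1 + 0.75 * y + 0.174 * y ^ 2) := by
  set x : ℝ := 1 + 0.75 * y + 0.174 * y ^ 2 with hx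
  have hxpos : 0 < x := by rw [hx]; nlinarith [sq_nonneg y, sq_nonneg (y + 1)]
  have hlog : 1 - x⁻¹ ≤ Real.log x := by
    have h := Real.log_le_sub_one_of_pos (inv_pos.mpr hxpos)
    rw [Real.log_inv] at h
    linarith
  have hinv : x⁻¹ ≤ 1 - (0.75 * y - 0.75 * y ^ 2) := by
    rw [inv_le_iff_one_le_mul₀ hxpos, hx]
    nlinarith [sq_nonneg (0.1305 * y ^ 2 + 0.216 * y), sq_nonneg y, sq_nonneg (y * y)]
  linarith
end

section
/- For all real y with -1 ≤ y ≤ 1, we have 0.75·y·(1 - min(y²,1)) - √3·min(y²,1) ≤ log(1 + 0.75·y + 0.174·y²). -/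
theorem stmt_6 (y : ℝ) (h0 : -1 ≤ y) (h1 : y ≤ 1) :
    0.75 * y * (1 - min (y ^ 2) 1) - Real.sqrt 3 * min (y ^ 2) 1 ≤
      Real.log (1 + 0.75 * y + 0.174 * y ^ 2) := by
  have hy2 : y ^ 2 ≤ 1 := by nlinarith
  rw [min_eq_left hy2]
  set x : ℝ := 1 + 0.75 * y + 0.174 * y ^ 2 with hx
  have hxpos : 0 < x := by rw [hx]; nlinarith [sq_nonneg (y+1)]
  have hlog : 1 - 1/x ≤ Real.log x := by
    have h := Real.log_le_sub_one_of_pos (x := 1/x) (by positivity)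
    rw [Real.log_div one_ne_zero (ne_of_gt hxpos), Real.log_one] at h
    linarith
  have h3 : (1.732:ℝ) ≤ Real.sqrt 3 := by
    nlinarith [Real.sq_sqrt (by norm_num : (0:ℝ) ≤ 3), Real.sqrt_nonneg 3]
  set L : ℝ := 0.75 * y * (1 - y ^ 2) - Real.sqrt 3 * y ^ 2 with hL
  have h2 : L * x ≤ x - 1 := by
    have hs : 0 ≤ (Real.sqrt 3 - 1.732) * (y ^ 2 * x) :=
      mul_nonneg (by linarith) (mul_nonneg (sq_nonneg y) hxpos.le)
    rw [hL, hx]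
    rw [hx] at hs
    nlinarith [sq_nonneg y, sq_nonneg (y*y), sq_nonneg (y + 1), sq_nonneg (y - 1),
      mul_nonneg (mul_nonneg (sub_nonneg.mpr h0) (sub_nonneg.mpr h1)) (sq_nonneg y),
      mul_nonneg (sub_nonneg.mpr h0) (sub_nonneg.mpr h1)]
  have key : L ≤ 1 - 1/x := by
    have := (div_le_div_iff_of_pos_right hxpos).mpr h2
    rw [mul_div_assoc, div_self (ne_of_gt hxpos), mul_one] at this
    calc L ≤ (x - 1)/x := this
      _ = 1 - 1/x := by field_simp
  exact key.trans hlog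
end

section
/- For all real y, we have 0.75·y·(1 - min(y²,1)) - √3·min(y²,1) ≤ log(1 + 0.75·y + 0.174·y²). -/
set_option maxHeartbeats 1600000 in
theorem stmt_7 (y : ℝ) :
    0.75 * y * (1 - min (y ^ 2) 1) - Real.sqrt 3 * min (y ^ 2) 1 ≤
      Real.log (1 + 0.75 * y + 0.174 * y ^ 2) := by
  have hs3 : Real.sqrt 3 ^ 2 = 3 := Real.sq_sqrt (by norm_num)
  have hsnn : (0:ℝ) ≤ Real.sqrt 3 := Real.sqrt_nonneg 3
  have hs1 : (1.732:ℝ) ≤ Real.sqrt 3 := by nlinarith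
  have hs2 : Real.sqrt 3 ≤ 1.7321 := by nlinarith
  have hQlb : (0.1918:ℝ) ≤ 1 + 0.75 * y + 0.174 * y ^ 2 := by
    nlinarith [sq_nonneg (0.348 * y + 0.75)]
  have hQpos : (0:ℝ) < 1 + 0.75 * y + 0.174 * y ^ 2 := by linarith
  rcases le_or_gt (y ^ 2) 1 with h | h
  · rw [min_eq_left h]
    have hlog : 1 - 1 / (1 + 0.75 * y + 0.174 * y ^ 2) ≤
        Real.log (1 + 0.75 * y + 0.174 * y ^ 2) := by
      have := Real.log_le_sub_one_of_pos (x := 1 / (1 + 0.75 * y + 0.174 * y ^ 2))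
        (by positivity)
      rw [Real.log_div one_ne_zero (ne_of_gt hQpos), Real.log_one] at this
      linarith
    have h1 : -1 ≤ y := by nlinarith
    have h2 : y ≤ 1 := by nlinarith
    have hg : 0 ≤ (Real.sqrt 3 - 0.3885) + (0.6195 + 0.75 * Real.sqrt 3) * y +
        (0.5625 + 0.174 * Real.sqrt 3) * y ^ 2 + 0.1305 * y ^ 3 := by
      nlinarith [mul_nonneg (mul_nonneg (by linarith : (0:ℝ) ≤ 1 + y)
        (by linarith : (0:ℝ) ≤ 1 + y)) (by linarith : (0:ℝ) ≤ 1 - y),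
        sq_nonneg (1 + y), sq_nonneg y, sq_nonneg (1 - y)]
    have hPQ : (0.75 * y * (1 - y ^ 2) - Real.sqrt 3 * y ^ 2) *
        (1 + 0.75 * y + 0.174 * y ^ 2) ≤ (1 + 0.75 * y + 0.174 * y ^ 2) - 1 := by
      nlinarith [mul_nonneg (sq_nonneg y) hg]
    have key : 0.75 * y * (1 - y ^ 2) - Real.sqrt 3 * y ^ 2 ≤
        1 - 1 / (1 + 0.75 * y + 0.174 * y ^ 2) := by
      have hd : 1 / (1 + 0.75 * y + 0.174 * y ^ 2) ≤
          1 - (0.75 * y * (1 - y ^ 2) - Real.sqrt 3 * y ^ 2) := by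
        rw [div_le_iff₀ hQpos]; nlinarith
      linarith
    linarith
  · rw [min_eq_right h.le]
    have hexp : (5.214:ℝ) ≤ Real.exp 1.732 := by
      have h32 : Real.exp ((32:ℕ) * (0.054125:ℝ)) = Real.exp 0.054125 ^ 32 :=
        Real.exp_nat_mul 0.054125 32
      norm_num at h32
      have hb : (1.054125:ℝ) ≤ Real.exp 0.054125 := by
        have := Real.add_one_le_exp (0.054125:ℝ); linarith
      have hp : (1.054125:ℝ) ^ 32 ≤ Real.exp 0.054125 ^ 32 :=
        pow_le_pow_left₀ (by norm_num) hb 32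
      have hnum : (5.214:ℝ) ≤ (1.054125:ℝ) ^ 32 := by norm_num
      have hE : Real.exp (0.054125:ℝ) ^ 32 = Real.exp 1.732 := by
        rw [show (0.054125:ℝ) = 433/8000 by norm_num,
          show (1.732:ℝ) = 433/250 by norm_num]
        exact h32.symm
      linarith [hE ▸ hp]
    have h2' : Real.exp (-1.732) ≤ 0.1918 := by
      rw [Real.exp_neg, inv_le_comm₀ (Real.exp_pos _) (by norm_num)]
      calc (0.1918:ℝ)⁻¹ ≤ 5.214 := by norm_num
        _ ≤ Real.exp 1.732 := hexp
    have hexpneg : Real.exp (-Real.sqrt 3) ≤ 1 + 0.75 * y + 0.174 * y ^ 2 := by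
      have h1' : Real.exp (-Real.sqrt 3) ≤ Real.exp (-1.732) :=
        Real.exp_le_exp.mpr (by linarith)
      linarith
    have hfin := (Real.le_log_iff_exp_le hQpos).mpr hexpneg
    linarith
end

section
/- Let 0 < a < √12 and z = (√12 - a)/√12, so 0 < z ≤ 1. Then 1/(-2 + a - 36/(a² - 12)) ≤ z, i.e., the inverse of the rational expression -2 + a - 36/(a²-12) is bounded above by its linear approximation (√12 - a)/√12. -/
theorem stmt_11 (a : ℝ) (ha : 0 < a) (ha' : a < Real.sqrt 12) :
    1 / (-2 + a - 36 / (a ^ 2 - 12)) ≤ (Real.sqrt 12 - a) / Real.sqrt 12 := by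
  set s := Real.sqrt 12 with hs_def
  have hs0 : 0 < s := Real.sqrt_pos.mpr (by norm_num)
  have hs : s ^ 2 = 12 := Real.sq_sqrt (by norm_num)
  have hneg : a ^ 2 - 12 < 0 := by nlinarith
  have ht : 36 / (a ^ 2 - 12) * (a ^ 2 - 12) = 36 := div_mul_cancel₀ _ (ne_of_lt hneg)
  have h3 : -(36 / (a ^ 2 - 12)) ≥ 3 := by
    rw [ge_iff_le, le_neg, div_le_iff_of_neg hneg]; nlinarith
  have hE : 0 < -2 + a - 36 / (a ^ 2 - 12) := by linarith
  rw [div_le_div_iff₀ hE hs0]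
  nlinarith [ht, hs, mul_pos (sub_pos.mpr ha') hE, sq_nonneg (s - a),
    mul_pos hs0 (sub_pos.mpr ha'), sq_nonneg (s*a - 12), sq_nonneg (a - 2),
    mul_pos (mul_pos hs0 (sub_pos.mpr ha')) (sub_pos.mpr ha')]
end
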